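/- Let F' be the 2×2 real matrix with rows (r_I·(1 - T⁰/T_max), (1-η)·β·T⁰) and (0, 0), and let W be the 2×2 real matrix with rows (δ, 0) and (-(1-ε)·p, c). Then W is invertible, and the eigenvalues (over ℂ) of the matrix F'·W⁻¹ are exactly 0 and R₀; in particular the spectral radius of F'·W⁻¹ equals R₀, and the (1,1) entry of F'·W⁻¹ equals R₀. -/

import Mathlib

/-!
`W` is lower triangular and `F'` has a zero second row, so `F'·W⁻¹` is upper triangular with
diagonal `(R₀, 0)`; its eigenvalues are therefore `R₀` and `0`. The spectral radius is `R₀`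
because `R₀ ≥ 0`, which rests on `0 ≤ T⁰ ≤ T_max`: `T⁰` is the positive root of
`r_T T (1 - T/T_max) - d_T T + s = 0`, and `s ≤ d_T T_max` puts it below `T_max`.
-/

open Set Matrix

/-- The uninfected equilibrium value `T⁰`. -/
noncomputable def hcvT0 (s rT dT Tmax : ℝ) : ℝ :=
  Tmax / (2 * rT) * (rT - dT + Real.sqrt ((rT - dT) ^ 2 + 4 * rT * s / Tmax))

/-- The basic reproduction number `R₀` (with `1 - θ = (1-ε)(1-η)`). -/
noncomputable def hcvR0 (s rT rI dT dI Tmax β p q c η ε : ℝ) : ℝ :=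
  rI / (dI + q) * (1 - hcvT0 s rT dT Tmax / Tmax)
    + (1 - ε) * (1 - η) * β * p * hcvT0 s rT dT Tmax / (c * (dI + q))

theorem hcvT0_nonneg {s rT dT Tmax : ℝ} (hs : 0 ≤ s) (hrT : 0 < rT) (hTmax : 0 < Tmax) :
    0 ≤ hcvT0 s rT dT Tmax := by
  have hsource : 0 ≤ 4 * rT * s / Tmax := by positivity
  have hroot := Real.abs_le_sqrt (x := rT - dT) (y := (rT - dT) ^ 2 + 4 * rT * s / Tmax)
    (by linarith)
  exact mul_nonneg (by positivity) (by linarith [neg_le_abs (rT - dT)])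

theorem hcvT0_le_Tmax {s rT dT Tmax : ℝ} (hrT : 0 < rT) (hdT : 0 ≤ dT) (hTmax : 0 < Tmax)
    (hsT : s ≤ dT * Tmax) : hcvT0 s rT dT Tmax ≤ Tmax := by
  have hsource : 4 * rT * s / Tmax ≤ 4 * rT * dT := by
    rw [div_le_iff₀ hTmax]; nlinarith
  have hroot : √((rT - dT) ^ 2 + 4 * rT * s / Tmax) ≤ rT + dT :=
    (Real.sqrt_le_left (by linarith)).2 (by nlinarith)
  calc hcvT0 s rT dT Tmax ≤ Tmax / (2 * rT) * (2 * rT) :=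
        mul_le_mul_of_nonneg_left (by linarith) (by positivity)
    _ = Tmax := by field_simp

theorem hcvR0_nonneg {s rT rI dT dI Tmax β p q c η ε : ℝ} (hs : 0 ≤ s) (hrT : 0 < rT)
    (hrI : 0 ≤ rI) (hdT : 0 ≤ dT) (hδ : 0 ≤ dI + q) (hTmax : 0 < Tmax) (hβ : 0 ≤ β)
    (hp : 0 ≤ p) (hc : 0 ≤ c) (hη : η ≤ 1) (hε : ε ≤ 1) (hsT : s ≤ dT * Tmax) :
    0 ≤ hcvR0 s rT rI dT dI Tmax β p q c η ε := by
  have hT0 := hcvT0_nonneg (dT := dT) hs hrT hTmax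
  have hfrac : 0 ≤ 1 - hcvT0 s rT dT Tmax / Tmax := by
    rw [sub_nonneg, div_le_one hTmax]; exact hcvT0_le_Tmax hrT hdT hTmax hsT
  have hε' : 0 ≤ 1 - ε := by linarith
  have hη' : 0 ≤ 1 - η := by linarith
  unfold hcvR0
  positivity

theorem Matrix.inv_fin_two_lowerTriangular {K : Type*} [Field K] {a d : K} (b : K)
    (ha : a ≠ 0) (hd : d ≠ 0) : (!![a, 0; b, d])⁻¹ = !![a⁻¹, 0; -b / (a * d), d⁻¹] := by
  refine inv_eq_right_inv ?_
  rw [mul_fin_two, one_fin_two]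
  congr 1
  field_simp
  simp [ha, hd]

theorem Matrix.map_fin_two_of {α β : Type*} (f : α → β) (a b c d : α) :
    (!![a, b; c, d]).map f = !![f a, f b; f c, f d] := by
  ext i j; fin_cases i <;> fin_cases j <;> rfl

open Polynomial in
theorem Matrix.spectrum_fin_two_upperTriangular {K : Type*} [Field K] (a b d : K) :
    spectrum K !![a, b; 0, d] = {a, d} := by
  ext z
  rw [mem_spectrum_iff_isRoot_charpoly, charpoly_fin_two, trace_fin_two_of, det_fin_two_of]
  simp only [IsRoot.def, eval_add, eval_sub, eval_mul, eval_pow, eval_C, eval_X]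
  rw [show z ^ 2 - (a + d) * z + (a * d - b * 0) = (z - a) * (z - d) by ring, mul_eq_zero,
    sub_eq_zero, sub_eq_zero]
  rfl

theorem isGreatest_norm_image_zero_ofReal {r : ℝ} (hr : 0 ≤ r) :
    IsGreatest ((fun z : ℂ => ‖z‖) '' {0, (r : ℂ)}) r := by
  rw [image_pair, norm_zero, Complex.norm_real, Real.norm_of_nonneg hr]
  simpa [max_eq_right hr] using isGreatest_pair (a := (0 : ℝ)) (b := r)

theorem hcv_next_generation_matrix_general
    (s rT rI dT dI Tmax β p q c η ε : ℝ)
    (hs : 0 < s) (hrT : 0 < rT) (hrI : 0 < rI) (hdT : 0 < dT) (hdI : 0 < dI)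
    (hTmax : 0 < Tmax) (hβ : 0 < β) (hp : 0 < p) (hq : 0 < q) (hc : 0 < c)
    (hη : η ∈ Set.Ico (0 : ℝ) 1) (hε : ε ∈ Set.Ico (0 : ℝ) 1)
    (hsT : s ≤ dT * Tmax)
    (F' W : Matrix (Fin 2) (Fin 2) ℝ)
    (hF : F' = !![rI * (1 - hcvT0 s rT dT Tmax / Tmax),
                  (1 - η) * β * hcvT0 s rT dT Tmax; 0, 0])
    (hW : W = !![dI + q, 0; -((1 - ε) * p), c]) :
    IsUnit W ∧
    (∀ z : ℂ, z ∈ spectrum ℂ ((F' * W⁻¹).map (Complex.ofReal)) ↔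
      z = 0 ∨ z = (hcvR0 s rT rI dT dI Tmax β p q c η ε : ℂ)) ∧
    IsGreatest ((fun z : ℂ => ‖z‖) ''
        spectrum ℂ ((F' * W⁻¹).map (Complex.ofReal)))
      (hcvR0 s rT rI dT dI Tmax β p q c η ε) ∧
    (F' * W⁻¹) 0 0 = hcvR0 s rT rI dT dI Tmax β p q c η ε := by
  have hδ : dI + q ≠ 0 := by positivity
  have hNGM : F' * W⁻¹ = !![hcvR0 s rT rI dT dI Tmax β p q c η ε,
      (1 - η) * β * hcvT0 s rT dT Tmax / c; 0, 0] := by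
    rw [hF, hW, inv_fin_two_lowerTriangular _ hδ hc.ne', mul_fin_two, hcvR0]
    ext i j
    fin_cases i <;> fin_cases j <;> simp <;> field_simp
  have hspec : spectrum ℂ ((F' * W⁻¹).map Complex.ofReal) =
      {0, (hcvR0 s rT rI dT dI Tmax β p q c η ε : ℂ)} := by
    rw [hNGM, map_fin_two_of, Complex.ofReal_zero, spectrum_fin_two_upperTriangular, pair_comm]
  refine ⟨?_, fun z => by rw [hspec]; rfl, ?_, by simp [hNGM]⟩
  · rw [isUnit_iff_isUnit_det, hW, det_fin_two_of, isUnit_iff_ne_zero]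
    simpa using mul_ne_zero hδ hc.ne'
  · rw [hspec]
    exact isGreatest_norm_image_zero_ofReal (hcvR0_nonneg hs.le hrT hrI.le hdT.le
      (by positivity) hTmax hβ.le hp.le hc.le hη.2.le hε.2.le hsT)

/-- The next-generation matrix `F'·W⁻¹` has eigenvalues `0` and `R₀`;
its spectral radius and `(1,1)` entry are `R₀`. -/
theorem hcv_next_generation_matrix
    (s rT rI dT dI Tmax β p q c η ε : ℝ)
    (hs : 0 < s) (hrT : 0 < rT) (hrI : 0 < rI) (hdT : 0 < dT) (hdI : 0 < dI)
    (hTmax : 0 < Tmax) (hβ : 0 < β) (hp : 0 < p) (hq : 0 < q) (hc : 0 < c)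
    (hη : η ∈ Set.Ico (0 : ℝ) 1) (hε : ε ∈ Set.Ico (0 : ℝ) 1)
    (hrIT : rI ≤ rT) (hsT : s ≤ dT * Tmax) (hdTI : dT ≤ dI)
    (F' W : Matrix (Fin 2) (Fin 2) ℝ)
    (hF : F' = !![rI * (1 - hcvT0 s rT dT Tmax / Tmax),
                  (1 - η) * β * hcvT0 s rT dT Tmax; 0, 0])
    (hW : W = !![dI + q, 0; -((1 - ε) * p), c]) :
    IsUnit W ∧
    (∀ z : ℂ, z ∈ spectrum ℂ ((F' * W⁻¹).map (Complex.ofReal)) ↔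
      z = 0 ∨ z = (hcvR0 s rT rI dT dI Tmax β p q c η ε : ℂ)) ∧
    IsGreatest ((fun z : ℂ => ‖z‖) ''
        spectrum ℂ ((F' * W⁻¹).map (Complex.ofReal)))
      (hcvR0 s rT rI dT dI Tmax β p q c η ε) ∧
    (F' * W⁻¹) 0 0 = hcvR0 s rT rI dT dI Tmax β p q c η ε :=
  hcv_next_generation_matrix_general s rT rI dT dI Tmax β p q c η ε hs hrT hrI hdT hdI hTmax hβ hp
    hq hc hη hε hsT F' W hF hW
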